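/- arXiv:1103.5861 — 6 statements merged into one kernel-verified Lean document; each statement's English description precedes it below -/
import Mathlib

section
/- If F = (f₁,…,f_r) is a system of multiplicative arithmetical functions of one variable and G = (g₁,…,g_r) is any system of polynomials with integer coefficients, then the function of r variables S_F^{(G)}(m₁,…,m_r) := (1/m) · ∑_{k=1}^{m} f₁(gcd(g₁(k), m₁)) ⋯ f_r(gcd(g_r(k), m_r)), where m = lcm[m₁,…,m_r], is multiplicative: S_F^{(G)}(m₁n₁,…,m_r n_r) = S_F^{(G)}(m₁,…,m_r) · S_F^{(G)}(n₁,…,n_r) whenever gcd(m₁⋯m_r, n₁⋯n_r) = 1. -/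
/-!
The summand `k ↦ ∏ᵢ fᵢ(gcd(gᵢ(k), mᵢ))` is periodic modulo `lcm[m₁,…,m_r]`, since
`gᵢ(k + L) ≡ gᵢ(k) (mod mᵢ)` whenever `mᵢ ∣ L`. For coprime systems `m` and `n`,
`gcd(a, mᵢnᵢ) = gcd(a, mᵢ) gcd(a, nᵢ)` with coprime factors, so by multiplicativity of the `fᵢ` the
summand for `mn` is the product of the summands for `m` and `n`, and `lcm[mn] = lcm[m] lcm[n]`.
The Chinese remainder theorem `ℤ/MN ≃ ℤ/M × ℤ/N` then turns the sum over a full period of this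
product of an `M`-periodic and an `N`-periodic function into the product of the two sums.
-/

open Finset

/-- `SF f g m = (1/lcm[m₁,…,m_r]) ∑_{k=1}^{lcm[m₁,…,m_r]} ∏ᵢ fᵢ(gcd(gᵢ(k), mᵢ))`. -/
noncomputable def SF {r : ℕ} (f : Fin r → ℕ → ℂ) (g : Fin r → Polynomial ℤ)
    (m : Fin r → ℕ) : ℂ :=
  (1 / ((Finset.univ.lcm m : ℕ) : ℂ)) *
    ∑ k ∈ Finset.Icc 1 (Finset.univ.lcm m),
      ∏ i, f i (Int.gcd ((g i).eval (k : ℤ)) (m i))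

open Function Polynomial

theorem Polynomial.periodic_gcd_eval (p : ℤ[X]) {a L : ℕ} (h : a ∣ L) :
    Periodic (fun k : ℕ => Int.gcd (p.eval (k : ℤ)) a) L := by
  intro k
  have hL : (L : ℤ) ∣ p.eval ((k : ℤ) + L) - p.eval (k : ℤ) := by
    simpa using sub_dvd_eval_sub ((k : ℤ) + L) k p
  obtain ⟨c, hc⟩ := (Int.natCast_dvd_natCast.2 h).trans hL
  simp only [Nat.cast_add]
  rw [show p.eval ((k : ℤ) + L) = p.eval (k : ℤ) + a * c by linarith,
    Int.gcd_add_mul_left_left]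

theorem Function.Periodic.sum_Icc_one_eq_sum_range {M : Type*} [AddCommMonoid M] {P : ℕ → M}
    {L : ℕ} (hP : Periodic P L) : ∑ k ∈ Icc 1 L, P k = ∑ k ∈ range L, P k := by
  rw [← Ico_add_one_right_eq_Icc, sum_Ico_eq_sum_range, add_tsub_cancel_right]
  cases L with
  | zero => rfl
  | succ n =>
    rw [sum_range_succ, sum_range_succ', add_comm 1 n, ← hP 0, zero_add]
    simp only [add_comm 1]

theorem Finset.sum_range_eq_sum_zmod_val {M : Type*} [AddCommMonoid M] (L : ℕ) [NeZero L]
    (P : ℕ → M) : ∑ k ∈ range L, P k = ∑ x : ZMod L, P x.val := by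
  obtain ⟨n, rfl⟩ : ∃ n, L = n + 1 := Nat.exists_eq_succ_of_ne_zero (NeZero.ne L)
  exact (Fin.sum_univ_eq_sum_range P (n + 1)).symm

theorem Finset.sum_range_mul_eq_mul_of_coprime {R : Type*} [CommSemiring R] {P Q : ℕ → R}
    {M N : ℕ} (h : M.Coprime N) (hP : Periodic P M) (hQ : Periodic Q N) :
    ∑ k ∈ range (M * N), P k * Q k = (∑ k ∈ range M, P k) * ∑ k ∈ range N, Q k := by
  rcases eq_or_ne M 0 with rfl | hM
  · simp
  rcases eq_or_ne N 0 with rfl | hN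
  · simp
  have : NeZero M := ⟨hM⟩
  have : NeZero N := ⟨hN⟩
  rw [sum_range_eq_sum_zmod_val, sum_range_eq_sum_zmod_val, sum_range_eq_sum_zmod_val,
    sum_mul_sum, ← sum_product', univ_product_univ]
  refine Fintype.sum_equiv (ZMod.chineseRemainder h).toEquiv _ _ fun x => ?_
  change _ = P (ZMod.cast x : ZMod M × ZMod N).1.val * Q (ZMod.cast x : ZMod M × ZMod N).2.val
  rw [Prod.fst_zmod_cast, Prod.snd_zmod_cast, ZMod.cast_eq_val, ZMod.cast_eq_val,
    ZMod.val_natCast, ZMod.val_natCast, hP.map_mod_nat, hQ.map_mod_nat]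

theorem Finset.lcm_mul_eq_mul_lcm_of_coprime {ι : Type*} (s : Finset ι) {m n : ι → ℕ}
    (h : (s.lcm m).Coprime (s.lcm n)) : s.lcm (fun i => m i * n i) = s.lcm m * s.lcm n :=
  Nat.dvd_antisymm (lcm_dvd fun _ hi => mul_dvd_mul (dvd_lcm hi) (dvd_lcm hi))
    (h.mul_dvd_of_dvd_of_dvd (lcm_dvd fun _ hi => (dvd_mul_right _ _).trans (dvd_lcm hi))
      (lcm_dvd fun _ hi => (dvd_mul_left _ _).trans (dvd_lcm hi)))

namespace SF

variable {r : ℕ} (f : Fin r → ℕ → ℂ) (g : Fin r → Polynomial ℤ)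

noncomputable def term (m : Fin r → ℕ) (k : ℕ) : ℂ :=
  ∏ i, f i (Int.gcd ((g i).eval (k : ℤ)) (m i))

theorem term_periodic {m : Fin r → ℕ} {L : ℕ} (h : ∀ i, m i ∣ L) : Periodic (term f g m) L :=
  fun k => prod_congr rfl fun i _ => congrArg (f i) ((g i).periodic_gcd_eval (h i) k)

variable {f} in
theorem term_mul (hf : ∀ i, ∀ a b : ℕ, Nat.Coprime a b → f i (a * b) = f i a * f i b)
    {m n : Fin r → ℕ} (hmn : ∀ i, (m i).Coprime (n i)) (k : ℕ) :
    term f g (fun i => m i * n i) k = term f g m k * term f g n k := by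
  rw [term, term, term, ← prod_mul_distrib]
  refine prod_congr rfl fun i _ => ?_
  have hgcd : Int.gcd ((g i).eval (k : ℤ)) ((m i * n i : ℕ) : ℤ) =
      Int.gcd ((g i).eval (k : ℤ)) (m i) * Int.gcd ((g i).eval (k : ℤ)) (n i) :=
    (hmn i).gcd_mul _
  rw [hgcd]
  exact hf i _ _ ((hmn i).gcd_both _ _)

theorem eq_sum_range (m : Fin r → ℕ) :
    SF f g m = 1 / ((univ.lcm m : ℕ) : ℂ) * ∑ k ∈ range (univ.lcm m), term f g m k :=
  congrArg _ (term_periodic f g fun i => dvd_lcm (mem_univ i)).sum_Icc_one_eq_sum_range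

end SF

theorem stmt3_general (r : ℕ) (f : Fin r → ℕ → ℂ) (g : Fin r → Polynomial ℤ)
    (hf : ∀ i, ∀ a b : ℕ, Nat.Coprime a b → f i (a * b) = f i a * f i b)
    (m n : Fin r → ℕ)
    (h : Nat.Coprime (∏ i, m i) (∏ i, n i)) :
    SF f g (fun i => m i * n i) = SF f g m * SF f g n := by
  have hmn : ∀ i, (m i).Coprime (n i) := fun i =>
    (h.coprime_dvd_left (dvd_prod_of_mem m (mem_univ i))).coprime_dvd_right
      (dvd_prod_of_mem n (mem_univ i))
  have hMN : (univ.lcm m).Coprime (univ.lcm n) :=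
    (h.coprime_dvd_left (lcm_dvd_prod _ _)).coprime_dvd_right (lcm_dvd_prod _ _)
  rw [SF.eq_sum_range, SF.eq_sum_range, SF.eq_sum_range, lcm_mul_eq_mul_lcm_of_coprime _ hMN]
  simp_rw [SF.term_mul g hf hmn]
  rw [sum_range_mul_eq_mul_of_coprime hMN (SF.term_periodic f g fun i => dvd_lcm (mem_univ i))
    (SF.term_periodic f g fun i => dvd_lcm (mem_univ i))]
  push_cast
  ring

theorem stmt3 (r : ℕ) (f : Fin r → ℕ → ℂ) (g : Fin r → Polynomial ℤ)
    (hf0 : ∀ i, f i ≠ 0)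
    (hf : ∀ i, ∀ a b : ℕ, Nat.Coprime a b → f i (a * b) = f i a * f i b)
    (m n : Fin r → ℕ) (hm : ∀ i, 0 < m i) (hn : ∀ i, 0 < n i)
    (h : Nat.Coprime (∏ i, m i) (∏ i, n i)) :
    SF f g (fun i => m i * n i) = SF f g m * SF f g n :=
  stmt3_general r f g hf m n h
end

section
/- Let r ≥ 1, let G = (g₁,…,g_r) be a system of polynomials with integer coefficients and F = (f₁,…,f_r) a system of arithmetical functions (f_i : ℕ → ℂ). Let m₁,…,m_r ∈ ℕ, m := lcm[m₁,…,m_r], and let M ∈ ℕ with m ∣ M. Then (1/φ(M)) · ∑_{1 ≤ k ≤ M, gcd(k,M)=1} f₁(gcd(g₁(k), m₁)) ⋯ f_r(gcd(g_r(k), m_r)) = ∑_{d₁ ∣ m₁, …, d_r ∣ m_r} [(μ∗f₁)(d₁) ⋯ (μ∗f_r)(d_r) / φ(lcm[d₁,…,d_r])] · η_G(d₁,…,d_r). In particular the left-hand side does not depend on the choice of M. -/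
/-
Möbius inversion gives `fᵢ(gcd(a, mᵢ)) = ∑_{dᵢ ∣ mᵢ, dᵢ ∣ a} (μ∗fᵢ)(dᵢ)`; expanding the product
and swapping the sums reduces the identity to counting, for each `d`, the units `k` modulo `M` with
`dᵢ ∣ gᵢ(k)` for all `i`. This condition only depends on `k` modulo `L = lcm[d₁,…,d_r]`, and
reduction `(ℤ/M)ˣ → (ℤ/L)ˣ` is a surjective homomorphism, so each of its fibres has
`φ(M)/φ(L)` elements and the count is `φ(M)/φ(L) · η_G(d)`.
-/

open Finset

/-- Dirichlet convolution of the Möbius function with `f`. -/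
noncomputable def muConv (f : ℕ → ℂ) (d : ℕ) : ℂ :=
  ∑ e ∈ d.divisors, (ArithmeticFunction.moebius e : ℂ) * f (d / e)

/-- `etaG g d` is the number of residues `x` modulo `lcm[d₁,…,d_r]` satisfying the
simultaneous congruences `gᵢ(x) ≡ 0 (mod dᵢ)` together with `gcd(x, dᵢ) = 1` for all `i`. -/
def etaG {r : ℕ} (g : Fin r → Polynomial ℤ) (d : Fin r → ℕ) : ℕ :=
  ((Finset.range (Finset.univ.lcm d)).filter
    (fun x : ℕ => (∀ i, (d i : ℤ) ∣ (g i).eval (x : ℤ)) ∧ ∀ i, Nat.gcd x (d i) = 1)).card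

open Function Polynomial Nat

lemma sum_divisors_muConv (f : ℕ → ℂ) {n : ℕ} (hn : n ≠ 0) :
    ∑ d ∈ n.divisors, muConv f d = f n := by
  refine ArithmeticFunction.sum_eq_iff_sum_smul_moebius_eq.mpr (fun n _ => ?_) n
    (Nat.pos_of_ne_zero hn)
  rw [muConv, ← Nat.sum_divisorsAntidiagonal fun a b => (ArithmeticFunction.moebius a : ℂ) * f b]
  simp [zsmul_eq_mul]

lemma Int.divisors_gcd_natCast (a : ℤ) {m : ℕ} (hm : m ≠ 0) :
    (Int.gcd a m).divisors = m.divisors.filter fun d : ℕ => (d : ℤ) ∣ a := by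
  ext d
  simp only [Nat.mem_divisors, mem_filter, Int.gcd, Int.natAbs_natCast, Nat.dvd_gcd_iff,
    Int.natCast_dvd, ne_eq, Nat.gcd_ne_zero_right hm, hm, not_false_eq_true, and_true]
  exact and_comm

lemma apply_gcd_eq_sum_muConv (f : ℕ → ℂ) (a : ℤ) {m : ℕ} (hm : m ≠ 0) :
    f (Int.gcd a m) = ∑ d ∈ m.divisors.filter (fun d : ℕ => (d : ℤ) ∣ a), muConv f d := by
  rw [← Int.divisors_gcd_natCast a hm, sum_divisors_muConv]
  simp [Int.gcd_eq_zero_iff, hm]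

lemma prod_apply_gcd_eq_sum_prod_muConv {ι : Type*} [Fintype ι] [DecidableEq ι]
    (f : ι → ℕ → ℂ) (a : ι → ℤ) {m : ι → ℕ} (hm : ∀ i, m i ≠ 0) :
    ∏ i, f i (Int.gcd (a i) (m i)) =
      ∑ d ∈ (Fintype.piFinset fun i => (m i).divisors).filter (fun d => ∀ i, (d i : ℤ) ∣ a i),
        ∏ i, muConv (f i) (d i) := by
  simp_rw [apply_gcd_eq_sum_muConv _ _ (hm _), sum_filter, prod_univ_sum, prod_ite_zero, mem_univ,
    true_implies]

lemma Nat.coprime_finset_lcm_right_iff {ι : Type*} {s : Finset ι} {d : ι → ℕ} {k : ℕ} :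
    k.Coprime (s.lcm d) ↔ ∀ i ∈ s, k.Coprime (d i) :=
  ⟨fun h _ hi => h.coprime_dvd_right (dvd_lcm hi),
    fun h => (Nat.coprime_prod_right_iff.mpr h).coprime_dvd_right (s.lcm_dvd_prod d)⟩

lemma MonoidHom.card_filter_comp_mul_card {G H : Type*} [Group G] [Group H] [Fintype G]
    [Fintype H] [DecidableEq H] (f : G →* H) (hf : Surjective f) (p : H → Prop)
    [DecidablePred p] :
    #{g | p (f g)} * Fintype.card H = Fintype.card G * #{h | p h} := by
  have hfiber : ∀ h, #{g | f g = h} = #{g | f g = 1} := fun h =>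
    MonoidHom.card_fiber_eq_of_mem_range f (hf h) (hf 1)
  have hG : Fintype.card G = Fintype.card H * #{g | f g = 1} := by
    rw [← Finset.card_univ, card_eq_sum_card_fiberwise (f := f) (t := univ) (by simp)]
    simp only [hfiber, sum_const, Finset.card_univ, smul_eq_mul]
  have hp : #{g | p (f g)} = #{h | p h} * #{g | f g = 1} := by
    rw [card_eq_sum_card_fiberwise (f := f) (t := {h | p h}) (fun g hg => by simpa using hg)]
    rw [sum_congr rfl fun h hh => ?_, sum_const, smul_eq_mul]
    rw [filter_filter,
      filter_congr fun g _ => and_iff_right_of_imp fun hg => hg ▸ (mem_filter.1 hh).2, hfiber]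
  rw [hp, hG]
  ring

lemma ZMod.card_units_filter_val (n : ℕ) [NeZero n] (p : ℕ → Prop) [DecidablePred p] :
    #{u : (ZMod n)ˣ | p (u : ZMod n).val} = #{k ∈ range n | k.Coprime n ∧ p k} := by
  refine card_bij (fun u _ => (u : ZMod n).val) (fun u hu => ?_)
    (fun u _ v _ h => Units.ext (ZMod.val_injective n h)) (fun k hk => ?_)
  · simp only [mem_filter, mem_univ, true_and, mem_range] at hu ⊢
    exact ⟨ZMod.val_lt _, ZMod.val_coe_unit_coprime u, hu⟩
  · simp only [mem_filter, mem_range] at hk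
    have hval : (ZMod.unitOfCoprime k hk.2.1 : ZMod n).val = k := by
      rw [ZMod.coe_unitOfCoprime, ZMod.val_natCast, Nat.mod_eq_of_lt hk.1]
    refine ⟨ZMod.unitOfCoprime k hk.2.1, ?_, hval⟩
    simpa only [mem_filter, mem_univ, true_and, hval] using hk.2.2

lemma totient_mul_card_filter_coprime_range {L M : ℕ} (hLM : L ∣ M) (hM : M ≠ 0)
    (p : ℕ → Prop) [DecidablePred p] (hp : Periodic p L) :
    φ L * #{k ∈ range M | k.Coprime M ∧ p k} = φ M * #{x ∈ range L | x.Coprime L ∧ p x} := by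
  have : NeZero M := ⟨hM⟩
  have : NeZero L := ⟨ne_zero_of_dvd_ne_zero hM hLM⟩
  have hval : ∀ u : (ZMod M)ˣ, p (u : ZMod M).val ↔ p (ZMod.unitsMap hLM u : ZMod L).val := by
    intro u
    rw [ZMod.unitsMap_val, ZMod.cast_eq_val, ZMod.val_natCast, hp.map_mod_nat]
  rw [← ZMod.card_units_filter_val, ← ZMod.card_units_filter_val, filter_congr fun u _ => hval u,
    mul_comm, ← ZMod.card_units_eq_totient, ← ZMod.card_units_eq_totient]
  exact (ZMod.unitsMap hLM).card_filter_comp_mul_card (ZMod.unitsMap_surjective hLM)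
    fun v => p (v : ZMod L).val

lemma card_filter_Icc_one_eq_card_filter_range {n : ℕ} {p : ℕ → Prop} [DecidablePred p]
    (hp : Periodic p n) : #{k ∈ Icc 1 n | p k} = #{k ∈ range n | p k} := by
  rw [← Ico_add_one_right_eq_Icc, add_comm, Nat.filter_Ico_card_eq_of_periodic _ _ _ hp,
    range_eq_Ico, ← Nat.filter_Ico_card_eq_of_periodic 0 _ _ hp, zero_add]

lemma totient_mul_card_filter_coprime_Icc {L M : ℕ} (hLM : L ∣ M) (hM : M ≠ 0)
    (p : ℕ → Prop) [DecidablePred p] (hp : Periodic p L) :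
    φ L * #{k ∈ Icc 1 M | k.Coprime M ∧ p k} = φ M * #{x ∈ range L | x.Coprime L ∧ p x} := by
  have hpM : Periodic p M := Nat.div_mul_cancel hLM ▸ hp.nat_mul (M / L)
  rw [card_filter_Icc_one_eq_card_filter_range fun k => by rw [Nat.coprime_add_self_left, hpM k],
    totient_mul_card_filter_coprime_range hLM hM p hp]

lemma periodic_forall_dvd_eval {ι : Type*} (g : ι → ℤ[X]) (d : ι → ℕ) {L : ℕ}
    (hL : ∀ i, d i ∣ L) : Periodic (fun k : ℕ => ∀ i, (d i : ℤ) ∣ (g i).eval (k : ℤ)) L :=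
  fun k => propext <| forall_congr' fun i => dvd_iff_dvd_of_dvd_sub <|
    (Int.natCast_dvd_natCast.2 (hL i)).trans <| by
      simpa using sub_dvd_eval_sub ((k + L : ℕ) : ℤ) k (g i)

lemma etaG_eq_card_filter_coprime {r : ℕ} (g : Fin r → ℤ[X]) (d : Fin r → ℕ) :
    etaG g d = #{x ∈ range (univ.lcm d) |
      Nat.Coprime x (univ.lcm d) ∧ ∀ i, (d i : ℤ) ∣ (g i).eval (x : ℤ)} := by
  refine congrArg card (filter_congr fun x _ => ?_)
  rw [Nat.coprime_finset_lcm_right_iff]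
  simp only [mem_univ, true_implies]
  exact and_comm

lemma totient_lcm_mul_card_filter_dvd_eval {r : ℕ} (g : Fin r → ℤ[X]) (d : Fin r → ℕ) {M : ℕ}
    (hM : M ≠ 0) (hdM : ∀ i, d i ∣ M) :
    φ (univ.lcm d) * #{k ∈ Icc 1 M | Nat.Coprime k M ∧ ∀ i, (d i : ℤ) ∣ (g i).eval (k : ℤ)} =
      φ M * etaG g d :=
  etaG_eq_card_filter_coprime g d ▸ totient_mul_card_filter_coprime_Icc
    (Finset.lcm_dvd fun i _ => hdM i) hM _
    (periodic_forall_dvd_eval g d fun i => dvd_lcm (mem_univ i))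

theorem stmt5_general (r : ℕ) (g : Fin r → Polynomial ℤ) (f : Fin r → ℕ → ℂ)
    (m : Fin r → ℕ) (hm : ∀ i, 0 < m i) (M : ℕ) (hM0 : 0 < M)
    (hM : (Finset.univ.lcm m) ∣ M) :
    (1 / (Nat.totient M : ℂ)) *
        ∑ k ∈ (Finset.Icc 1 M).filter (fun k => Nat.gcd k M = 1),
          ∏ i, f i (Int.gcd ((g i).eval (k : ℤ)) (m i)) =
      ∑ d ∈ Fintype.piFinset (fun i => (m i).divisors),
        (∏ i, muConv (f i) (d i)) / ((Nat.totient (Finset.univ.lcm d) : ℕ) : ℂ) *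
          (etaG g d : ℂ) := by
  rw [sum_congr rfl fun k _ => prod_apply_gcd_eq_sum_prod_muConv f _ fun i => (hm i).ne',
    sum_comm' (t' := Fintype.piFinset fun i => (m i).divisors)
      (s' := fun d => {k ∈ Icc 1 M | Nat.Coprime k M ∧ ∀ i, (d i : ℤ) ∣ (g i).eval (k : ℤ)})
      fun k d => by simp only [mem_filter]; tauto, mul_sum]
  refine sum_congr rfl fun d hd => ?_
  have hdM : ∀ i, d i ∣ M := fun i => (Nat.dvd_of_mem_divisors (Fintype.mem_piFinset.1 hd i)).trans
    ((dvd_lcm (mem_univ i)).trans hM)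
  have hφM : (φ M : ℂ) ≠ 0 := by exact_mod_cast (Nat.totient_pos.2 hM0).ne'
  have hφL : (φ (univ.lcm d) : ℂ) ≠ 0 := by
    have hL : 0 < univ.lcm d := Nat.pos_of_dvd_of_pos (Finset.lcm_dvd fun i _ => hdM i) hM0
    exact_mod_cast (Nat.totient_pos.2 hL).ne'
  have hcount := congrArg (Nat.cast : ℕ → ℂ) (totient_lcm_mul_card_filter_dvd_eval g d hM0.ne' hdM)
  push_cast at hcount
  rw [sum_const, nsmul_eq_mul]
  field_simp
  linear_combination (∏ i, muConv (f i) (d i)) * hcount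

theorem stmt5 (r : ℕ) (hr : 1 ≤ r) (g : Fin r → Polynomial ℤ) (f : Fin r → ℕ → ℂ)
    (m : Fin r → ℕ) (hm : ∀ i, 0 < m i) (M : ℕ) (hM0 : 0 < M)
    (hM : (Finset.univ.lcm m) ∣ M) :
    (1 / (Nat.totient M : ℂ)) *
        ∑ k ∈ (Finset.Icc 1 M).filter (fun k => Nat.gcd k M = 1),
          ∏ i, f i (Int.gcd ((g i).eval (k : ℤ)) (m i)) =
      ∑ d ∈ Fintype.piFinset (fun i => (m i).divisors),
        (∏ i, muConv (f i) (d i)) / ((Nat.totient (Finset.univ.lcm d) : ℕ) : ℂ) *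
          (etaG g d : ℂ) :=
  stmt5_general r g f m hm M hM0 hM
end

section
/- If F = (f₁,…,f_r) is a system of multiplicative arithmetical functions of one variable and G = (g₁,…,g_r) is any system of polynomials with integer coefficients, then the function of r variables R_F^{(G)}(m₁,…,m_r) := (1/φ(m)) · ∑_{1 ≤ k ≤ m, gcd(k,m)=1} f₁(gcd(g₁(k), m₁)) ⋯ f_r(gcd(g_r(k), m_r)), where m = lcm[m₁,…,m_r], is multiplicative: R_F^{(G)}(m₁n₁,…,m_r n_r) = R_F^{(G)}(m₁,…,m_r) · R_F^{(G)}(n₁,…,n_r) whenever gcd(m₁⋯m_r, n₁⋯n_r) = 1. -/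
/-!
Every `mᵢ` divides `M = lcm m`, so the summand is periodic in `k` with period `M` and the average
is really one over the unit group `(ZMod M)ˣ`. When `m` and `n` are coprime, `lcm (m n) = M N`,
and multiplicativity of `fᵢ` splits each factor as
`fᵢ (gcd (gᵢ k) (mᵢ nᵢ)) = fᵢ (gcd (gᵢ k) mᵢ) * fᵢ (gcd (gᵢ k) nᵢ)`. The Chinese remainder theorem
`(ZMod (M N))ˣ ≃ (ZMod M)ˣ × (ZMod N)ˣ` then factors the sum, and `φ (M N) = φ M φ N` the weight.
-/

open Finset

/-- `RF f g m = (1/φ(lcm[m₁,…,m_r])) ∑_{1 ≤ k ≤ lcm, gcd(k,lcm)=1} ∏ᵢ fᵢ(gcd(gᵢ(k), mᵢ))`. -/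
noncomputable def RF {r : ℕ} (f : Fin r → ℕ → ℂ) (g : Fin r → Polynomial ℤ)
    (m : Fin r → ℕ) : ℂ :=
  (1 / (Nat.totient (Finset.univ.lcm m) : ℂ)) *
    ∑ k ∈ (Finset.Icc 1 (Finset.univ.lcm m)).filter
        (fun k => Nat.gcd k (Finset.univ.lcm m) = 1),
      ∏ i, f i (Int.gcd ((g i).eval (k : ℤ)) (m i))

open Function Polynomial

theorem Int.ModEq.gcd_eq {n a b : ℤ} (h : a ≡ b [ZMOD n]) : a.gcd n = b.gcd n := by
  rw [← Int.gcd_emod, h, Int.gcd_emod]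

theorem Int.ModEq.polynomial_eval (p : ℤ[X]) {n a b : ℤ} (h : a ≡ b [ZMOD n]) :
    p.eval a ≡ p.eval b [ZMOD n] :=
  Int.modEq_iff_dvd.mpr (h.dvd.trans (sub_dvd_eval_sub b a p))

theorem Finset.lcm_mul_of_coprime {ι : Type*} (s : Finset ι) {m n : ι → ℕ}
    (h : Nat.Coprime (s.lcm m) (s.lcm n)) :
    s.lcm (fun i => m i * n i) = s.lcm m * s.lcm n := by
  refine Nat.dvd_antisymm (Finset.lcm_dvd fun i hi => mul_dvd_mul (dvd_lcm hi) (dvd_lcm hi)) ?_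
  exact h.mul_dvd_of_dvd_of_dvd
    (Finset.lcm_dvd fun i hi => (dvd_mul_right _ _).trans (dvd_lcm (f := fun i => m i * n i) hi))
    (Finset.lcm_dvd fun i hi => (dvd_mul_left _ _).trans (dvd_lcm (f := fun i => m i * n i) hi))

def reducedResidues (M : ℕ) : Finset ℕ :=
  (Icc 1 M).filter (fun k => k.gcd M = 1)

section ReducedResidues

variable {β : Type*} {M N : ℕ} [NeZero M] [NeZero N]

theorem sum_reducedResidues_eq_sum_units [AddCommMonoid β] (H : ZMod M → β) :
    ∑ k ∈ reducedResidues M, H k = ∑ u : (ZMod M)ˣ, H u := by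
  -- `((k : ZMod M) - 1).val + 1` is the representative of `k` in `[1, M]`
  have cast_rep (x : ZMod M) : (((x - 1).val + 1 : ℕ) : ZMod M) = x := by
    simp
  refine Finset.sum_bij' (fun k hk => ZMod.unitOfCoprime k (mem_filter.mp hk).2)
    (fun u _ => ((u : ZMod M) - 1).val + 1) (fun _ _ => mem_univ _) ?_ ?_ ?_ ?_
  · intro u _
    simp only [reducedResidues, mem_filter, mem_Icc]
    refine ⟨⟨by omega, (ZMod.val_lt _)⟩, ?_⟩
    rw [← Nat.Coprime, ← ZMod.isUnit_iff_coprime, cast_rep]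
    exact u.isUnit
  · intro k hk
    simp only [reducedResidues, mem_filter, mem_Icc] at hk
    obtain ⟨k, rfl⟩ : ∃ j, k = j + 1 := ⟨k - 1, by omega⟩
    simp [ZMod.val_natCast, Nat.mod_eq_of_lt (by omega : k < M)]
  · intro u _
    ext
    simp [cast_rep]
  · intro k _
    simp

theorem sum_units_mul_of_coprime [CommSemiring β] (hMN : M.Coprime N)
    (H₁ : ZMod M → β) (H₂ : ZMod N → β) :
    ∑ u : (ZMod (M * N))ˣ,
        H₁ (ZMod.cast (u : ZMod (M * N))) * H₂ (ZMod.cast (u : ZMod (M * N))) =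
      (∑ u : (ZMod M)ˣ, H₁ u) * ∑ u : (ZMod N)ˣ, H₂ u := by
  let crt : (ZMod (M * N))ˣ ≃ (ZMod M)ˣ × (ZMod N)ˣ :=
    ((Units.mapEquiv (ZMod.chineseRemainder hMN).toMulEquiv).trans MulEquiv.prodUnits).toEquiv
  rw [Fintype.sum_mul_sum, ← Fintype.sum_prod_type']
  refine Fintype.sum_equiv crt _ _ fun u => ?_
  have h : ZMod.chineseRemainder hMN (u : ZMod (M * N)) = ZMod.cast (u : ZMod (M * N)) := rfl
  simp [crt, MulEquiv.prodUnits, h, Prod.fst_zmod_cast, Prod.snd_zmod_cast]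

theorem sum_reducedResidues_mul_of_coprime [CommSemiring β] (hMN : M.Coprime N)
    {F G : ℕ → β} (hF : Periodic F M) (hG : Periodic G N) :
    ∑ k ∈ reducedResidues (M * N), F k * G k =
      (∑ k ∈ reducedResidues M, F k) * ∑ k ∈ reducedResidues N, G k := by
  have descend {L : ℕ} [NeZero L] {F : ℕ → β} (hF : Periodic F L) :
      ∑ k ∈ reducedResidues L, F k = ∑ u : (ZMod L)ˣ, F (u : ZMod L).val := by
    rw [← sum_reducedResidues_eq_sum_units fun x => F x.val]
    exact sum_congr rfl fun k _ => by rw [ZMod.val_natCast, hF.map_mod_nat]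
  rw [descend hF, descend hG,
    ← sum_units_mul_of_coprime hMN (fun x => F x.val) (fun x => G x.val),
    ← sum_reducedResidues_eq_sum_units fun x =>
      F (ZMod.cast x : ZMod M).val * G (ZMod.cast x : ZMod N).val]
  refine sum_congr rfl fun k _ => ?_
  rw [ZMod.cast_natCast (dvd_mul_right M N), ZMod.cast_natCast (dvd_mul_left N M),
    ZMod.val_natCast, ZMod.val_natCast, hF.map_mod_nat, hG.map_mod_nat]

end ReducedResidues

section GcdEvalProd

variable {ι R : Type*} [Fintype ι] [CommMonoid R] (f : ι → ℕ → R) (g : ι → ℤ[X])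

def gcdEvalProd (m : ι → ℕ) (k : ℕ) : R :=
  ∏ i, f i (Int.gcd ((g i).eval (k : ℤ)) (m i))

theorem gcdEvalProd_periodic {m : ι → ℕ} {M : ℕ} (hmM : ∀ i, m i ∣ M) :
    Periodic (gcdEvalProd f g m) M := fun k => by
  refine prod_congr rfl fun i _ => ?_
  have hk : k + M ≡ k [MOD m i] := by
    simpa using ((Nat.modEq_zero_iff_dvd.mpr (hmM i)).add_left k)
  rw [(Int.natCast_modEq_iff.mpr hk |>.polynomial_eval (g i)).gcd_eq]

theorem gcdEvalProd_mul {m n : ι → ℕ}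
    (hf : ∀ i, ∀ a b : ℕ, Nat.Coprime a b → f i (a * b) = f i a * f i b)
    (hmn : ∀ i, (m i).Coprime (n i)) (k : ℕ) :
    gcdEvalProd f g (fun i => m i * n i) k = gcdEvalProd f g m k * gcdEvalProd f g n k := by
  rw [gcdEvalProd, gcdEvalProd, gcdEvalProd, ← prod_mul_distrib]
  refine prod_congr rfl fun i _ => ?_
  simp only [Int.gcd_eq_natAbs, Int.natAbs_natCast, Nat.cast_mul, Int.natAbs_mul]
  rw [(hmn i).gcd_mul]
  exact hf i _ _ <| ((hmn i).coprime_dvd_left (Nat.gcd_dvd_right _ _)).coprime_dvd_right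
    (Nat.gcd_dvd_right _ _)

end GcdEvalProd

theorem RF_eq_sum_reducedResidues {r : ℕ} (f : Fin r → ℕ → ℂ) (g : Fin r → ℤ[X])
    (m : Fin r → ℕ) :
    RF f g m =
      1 / (univ.lcm m).totient * ∑ k ∈ reducedResidues (univ.lcm m), gcdEvalProd f g m k :=
  rfl

theorem stmt7_general (r : ℕ) (f : Fin r → ℕ → ℂ) (g : Fin r → Polynomial ℤ)
    (hf : ∀ i, ∀ a b : ℕ, Nat.Coprime a b → f i (a * b) = f i a * f i b)
    (m n : Fin r → ℕ) (hm : ∀ i, 0 < m i) (hn : ∀ i, 0 < n i)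
    (h : Nat.Coprime (∏ i, m i) (∏ i, n i)) :
    RF f g (fun i => m i * n i) = RF f g m * RF f g n := by
  have hMN : (univ.lcm m).Coprime (univ.lcm n) :=
    (h.coprime_dvd_left (lcm_dvd_prod _ _)).coprime_dvd_right (lcm_dvd_prod _ _)
  have hmM i : m i ∣ univ.lcm m := dvd_lcm (mem_univ i)
  have hnN i : n i ∣ univ.lcm n := dvd_lcm (mem_univ i)
  have hmn i : (m i).Coprime (n i) := (hMN.coprime_dvd_left (hmM i)).coprime_dvd_right (hnN i)
  have : NeZero (univ.lcm m) := ⟨lcm_eq_zero_iff.not.mpr fun ⟨i, _, hi⟩ => (hm i).ne' hi⟩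
  have : NeZero (univ.lcm n) := ⟨lcm_eq_zero_iff.not.mpr fun ⟨i, _, hi⟩ => (hn i).ne' hi⟩
  simp only [RF_eq_sum_reducedResidues, univ.lcm_mul_of_coprime hMN, Nat.totient_mul hMN,
    gcdEvalProd_mul f g hf hmn]
  rw [sum_reducedResidues_mul_of_coprime hMN (gcdEvalProd_periodic f g hmM)
    (gcdEvalProd_periodic f g hnN)]
  push_cast
  ring

theorem stmt7 (r : ℕ) (f : Fin r → ℕ → ℂ) (g : Fin r → Polynomial ℤ)
    (hf0 : ∀ i, f i ≠ 0)
    (hf : ∀ i, ∀ a b : ℕ, Nat.Coprime a b → f i (a * b) = f i a * f i b)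
    (m n : Fin r → ℕ) (hm : ∀ i, 0 < m i) (hn : ∀ i, 0 < n i)
    (h : Nat.Coprime (∏ i, m i) (∏ i, n i)) :
    RF f g (fun i => m i * n i) = RF f g m * RF f g n :=
  stmt7_general r f g hf m n hm hn h
end

section
/- Let r ≥ 1, let a₁,…,a_r ∈ ℤ, let t₁,…,t_r be nonnegative integers, let m₁,…,m_r ∈ ℕ, m := lcm[m₁,…,m_r], and M ∈ ℕ with m ∣ M. Then (1/φ(M)) · ∑_{1 ≤ k ≤ M, gcd(k,M)=1} gcd(k − a₁, m₁)^{t₁} ⋯ gcd(k − a_r, m_r)^{t_r} = ∑_{d₁ ∣ m₁, …, d_r ∣ m_r} [φ_{t₁}(d₁) ⋯ φ_{t_r}(d_r) / φ(lcm[d₁,…,d_r])] · η^{(a)}(d₁,…,d_r), where η^{(a)}(d₁,…,d_r) = 1 if gcd(d_i, a_i) = 1 for 1 ≤ i ≤ r and gcd(d_i, d_j) ∣ a_i − a_j for 1 ≤ i, j ≤ r, and η^{(a)}(d₁,…,d_r) = 0 otherwise. -/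
open Finset

/-- The Jordan-type function `φ_t = μ ∗ id_t`, i.e.
`φ_t(n) = ∑_{e ∣ n} μ(e) (n/e)^t = n^t ∏_{p ∣ n} (1 - 1/p^t)`. -/
noncomputable def jordanPhi (t : ℕ) (n : ℕ) : ℂ :=
  ∑ e ∈ n.divisors, (ArithmeticFunction.moebius e : ℂ) * ((n / e : ℕ) : ℂ) ^ t

/-- `etaA a d = 1` if `gcd(dᵢ, aᵢ) = 1` for all `i` and `gcd(dᵢ, dⱼ) ∣ aᵢ - aⱼ`
for all `i, j`, and `0` otherwise. -/
def etaA {r : ℕ} (a : Fin r → ℤ) (d : Fin r → ℕ) : ℕ :=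
  if (∀ i, Int.gcd (a i) (d i) = 1) ∧
      (∀ i j, ((Nat.gcd (d i) (d j) : ℤ)) ∣ (a i - a j)) then 1 else 0

/-
Since `φ_t = μ ∗ id_t`, Möbius inversion gives `gcd(x, n)^t = ∑_{e ∣ gcd(x, n)} φ_t(e)`.
Expanding the product of these sums and exchanging the order of summation, the coefficient of
`∏ φ_{tᵢ}(dᵢ)` becomes the number of units `k` modulo `M` with `k ≡ aᵢ (mod dᵢ)` for all `i`.
By the Chinese remainder theorem for non-coprime moduli this system is solvable iff
`gcd(dᵢ, dⱼ) ∣ aᵢ - aⱼ`, and then its solutions form one class `b` modulo `D = lcm dᵢ`.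
The units over `b` are a fibre of the surjection `(ℤ/M)ˣ → (ℤ/D)ˣ` when `b` is a unit
(equivalently `gcd(aᵢ, dᵢ) = 1` for all `i`), so there are `φ(M)/φ(D)` of them, and none otherwise.
-/

open ArithmeticFunction in
theorem sum_divisors_jordanPhi (t : ℕ) {n : ℕ} (hn : n ≠ 0) :
    ∑ d ∈ n.divisors, jordanPhi t d = (n : ℂ) ^ t := by
  refine (sum_eq_iff_sum_mul_moebius_eq (g := fun n : ℕ => (n : ℂ) ^ t)).2 (fun n _ => ?_) n
    (Nat.pos_of_ne_zero hn)
  exact Nat.sum_divisorsAntidiagonal (fun e c => (moebius e : ℂ) * (c : ℂ) ^ t)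

theorem Int.dvd_gcd_natCast_iff {x : ℤ} {n e : ℕ} : e ∣ Int.gcd x n ↔ (e : ℤ) ∣ x ∧ e ∣ n := by
  refine ⟨fun h => ⟨?_, ?_⟩, fun h => Int.dvd_gcd h.1 (Int.natCast_dvd_natCast.2 h.2)⟩
  · exact (Int.natCast_dvd_natCast.2 h).trans (Int.gcd_dvd_left x n)
  · exact Int.natCast_dvd_natCast.1 ((Int.natCast_dvd_natCast.2 h).trans (Int.gcd_dvd_right x n))

theorem gcd_pow_eq_sum_jordanPhi (t : ℕ) (x : ℤ) {n : ℕ} (hn : n ≠ 0) :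
    ((Int.gcd x n : ℕ) : ℂ) ^ t = ∑ e ∈ n.divisors, if (e : ℤ) ∣ x then jordanPhi t e else 0 := by
  have hgcd : Int.gcd x n ≠ 0 := fun h => hn (by exact_mod_cast (Int.gcd_eq_zero_iff.1 h).2)
  rw [← sum_divisors_jordanPhi t hgcd, ← sum_filter]
  congr 1
  ext e
  simp only [Nat.mem_divisors, mem_filter, Int.dvd_gcd_natCast_iff]
  tauto

theorem prod_gcd_pow_eq_sum_jordanPhi {ι : Type*} [Fintype ι] [DecidableEq ι] (x : ι → ℤ)
    (t m : ι → ℕ) (hm : ∀ i, m i ≠ 0) :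
    ∏ i, ((Int.gcd (x i) (m i) : ℕ) : ℂ) ^ t i =
      ∑ d ∈ Fintype.piFinset (fun i => (m i).divisors),
        if ∀ i, (d i : ℤ) ∣ x i then ∏ i, jordanPhi (t i) (d i) else 0 := by
  simp only [gcd_pow_eq_sum_jordanPhi _ _ (hm _), prod_univ_sum, Fintype.prod_ite_zero]

theorem Nat.gcd_lcm_dvd_lcm_gcd (c a b : ℕ) : c.gcd (a.lcm b) ∣ (c.gcd a).lcm (c.gcd b) := by
  rcases eq_or_ne c 0 with rfl | hc
  · simp
  rcases eq_or_ne a 0 with rfl | ha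
  · simpa using Nat.dvd_lcm_left c _
  rcases eq_or_ne b 0 with rfl | hb
  · simpa using Nat.dvd_lcm_right _ c
  have hca : c.gcd a ≠ 0 := Nat.gcd_ne_zero_left hc
  have hcb : c.gcd b ≠ 0 := Nat.gcd_ne_zero_left hc
  rw [← Nat.factorization_le_iff_dvd (Nat.gcd_ne_zero_left hc) (Nat.lcm_ne_zero hca hcb),
    Nat.factorization_gcd hc (Nat.lcm_ne_zero ha hb), Nat.factorization_lcm ha hb,
    Nat.factorization_lcm hca hcb, Nat.factorization_gcd hc ha, Nat.factorization_gcd hc hb]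
  intro p
  simp only [Finsupp.inf_apply, Finsupp.sup_apply]
  omega

theorem Nat.gcd_finset_lcm_dvd {ι : Type*} (s : Finset ι) (c : ℕ) (d : ι → ℕ) :
    c.gcd (s.lcm d) ∣ s.lcm (fun j => c.gcd (d j)) := by
  classical
  induction s using Finset.induction with
  | empty => simp
  | insert i s _ ih =>
    rw [lcm_insert, lcm_insert, lcm_eq_nat_lcm, lcm_eq_nat_lcm]
    exact (c.gcd_lcm_dvd_lcm_gcd _ _).trans (lcm_dvd_lcm dvd_rfl ih)

theorem Int.exists_dvd_sub_and_dvd_sub {d e : ℕ} {x y : ℤ} (h : (d.gcd e : ℤ) ∣ x - y) :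
    ∃ c : ℤ, (d : ℤ) ∣ c - x ∧ (e : ℤ) ∣ c - y := by
  obtain ⟨w, hw⟩ := h
  have hbezout : (d.gcd e : ℤ) = d * Int.gcdA d e + e * Int.gcdB d e := by
    simpa using Int.gcd_eq_gcd_ab d e
  refine ⟨x - d * Int.gcdA d e * w, ⟨-(Int.gcdA d e * w), by ring⟩, ⟨Int.gcdB d e * w, ?_⟩⟩
  rw [hbezout] at hw
  linear_combination hw

theorem Int.natCast_finset_lcm_dvd_iff {ι : Type*} {s : Finset ι} {d : ι → ℕ} {x : ℤ} :
    ((s.lcm d : ℕ) : ℤ) ∣ x ↔ ∀ i ∈ s, (d i : ℤ) ∣ x := by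
  simp only [Int.natCast_dvd, Finset.lcm_dvd_iff]

theorem Int.exists_forall_dvd_sub_iff {ι : Type*} (s : Finset ι) (d : ι → ℕ) (a : ι → ℤ) :
    (∃ b : ℤ, ∀ i ∈ s, (d i : ℤ) ∣ b - a i) ↔
      ∀ i ∈ s, ∀ j ∈ s, ((d i).gcd (d j) : ℤ) ∣ a i - a j := by
  classical
  constructor
  · rintro ⟨b, hb⟩ i hi j hj
    have hbi := (Int.natCast_dvd_natCast.2 (Nat.gcd_dvd_left (d i) (d j))).trans (hb i hi)
    have hbj := (Int.natCast_dvd_natCast.2 (Nat.gcd_dvd_right (d i) (d j))).trans (hb j hj)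
    simpa using dvd_sub hbj hbi
  induction s using Finset.induction with
  | empty => exact fun _ => ⟨0, by simp⟩
  | insert i₀ s _ ih =>
    intro h
    obtain ⟨b, hb⟩ := ih fun i hi j hj => h i (mem_insert_of_mem hi) j (mem_insert_of_mem hj)
    have hcompat : ((d i₀).gcd (s.lcm d) : ℤ) ∣ a i₀ - b := by
      refine (Int.natCast_dvd_natCast.2 (Nat.gcd_finset_lcm_dvd s (d i₀) d)).trans ?_
      refine Int.natCast_finset_lcm_dvd_iff.2 fun j hj => ?_
      have hbj := (Int.natCast_dvd_natCast.2 (Nat.gcd_dvd_right (d i₀) (d j))).trans (hb j hj)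
      simpa using dvd_sub (h i₀ (mem_insert_self i₀ s) j (mem_insert_of_mem hj)) hbj
    obtain ⟨c, hc₀, hc⟩ := Int.exists_dvd_sub_and_dvd_sub hcompat
    refine ⟨c, forall_mem_insert _ _ _ |>.2 ⟨hc₀, fun i hi => ?_⟩⟩
    simpa using dvd_add ((Int.natCast_finset_lcm_dvd_iff.1 hc) i hi) (hb i hi)

theorem MonoidHom.card_fiber_mul_card_eq_card {G H : Type*} [Group G] [Fintype G] [Group H]
    [Fintype H] [DecidableEq H] {f : G →* H} (hf : Function.Surjective f) (y : H) :
    #{g | f g = y} * Fintype.card H = Fintype.card G := by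
  have hfibers := card_eq_sum_card_fiberwise (s := (univ : Finset G)) (t := univ) (f := f)
    fun g _ => mem_univ (f g)
  rw [sum_congr rfl fun y' _ => MonoidHom.card_fiber_eq_of_mem_range f (hf y') (hf y)] at hfibers
  rw [← card_univ (α := G), hfibers, sum_const, card_univ, smul_eq_mul, mul_comm]

theorem card_filter_range_coprime_eq_card_units {M : ℕ} [NeZero M] (P : ZMod M → Prop)
    [DecidablePred P] :
    #{k ∈ range M | k.Coprime M ∧ P ((k : ℕ) : ZMod M)} = #{u : (ZMod M)ˣ | P u} := by
  refine card_bij (fun k hk => ZMod.unitOfCoprime k (mem_filter.1 hk).2.1) ?_ ?_ ?_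
  · intro k hk
    simpa using (mem_filter.1 hk).2.2
  · intro k₁ hk₁ k₂ hk₂ h
    have h' := congrArg (fun u : (ZMod M)ˣ => (u : ZMod M)) h
    simp only [ZMod.coe_unitOfCoprime, ZMod.natCast_eq_natCast_iff'] at h'
    rwa [Nat.mod_eq_of_lt (mem_range.1 (mem_filter.1 hk₁).1),
      Nat.mod_eq_of_lt (mem_range.1 (mem_filter.1 hk₂).1)] at h'
  · intro u hu
    refine ⟨(u : ZMod M).val, ?_, Units.ext (by simp)⟩
    simpa [ZMod.val_lt] using ⟨ZMod.val_coe_unit_coprime u, (mem_filter.1 hu).2⟩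

theorem card_filter_Icc_coprime_eq_card_units {M : ℕ} [NeZero M] (P : ZMod M → Prop)
    [DecidablePred P] :
    #{k ∈ Icc 1 M | k.Coprime M ∧ P ((k : ℕ) : ZMod M)} = #{u : (ZMod M)ˣ | P u} := by
  have hperiodic : Function.Periodic (fun k : ℕ => k.Coprime M ∧ P ((k : ℕ) : ZMod M)) M :=
    fun k => by simp
  rw [← card_filter_range_coprime_eq_card_units, ← Nat.count_eq_card_filter_range,
    ← Nat.filter_Ico_card_eq_of_periodic 1 M _ hperiodic, add_comm, Ico_add_one_right_eq_Icc]

theorem card_units_filter_cast_mul_totient {D M : ℕ} [NeZero M] (hD : D ∣ M) {x : ZMod D}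
    (hx : IsUnit x) : #{u : (ZMod M)ˣ | ZMod.cast (u : ZMod M) = x} * D.totient = M.totient := by
  have : NeZero D := ⟨fun h => NeZero.ne M (Nat.eq_zero_of_zero_dvd (h ▸ hD))⟩
  have hfiber : ∀ u : (ZMod M)ˣ, ZMod.cast (u : ZMod M) = x ↔ ZMod.unitsMap hD u = hx.unit := by
    intro u
    rw [Units.ext_iff, ZMod.unitsMap_val, IsUnit.unit_spec]
  simp only [hfiber]
  rw [← ZMod.card_units_eq_totient, ← ZMod.card_units_eq_totient]
  exact MonoidHom.card_fiber_mul_card_eq_card (ZMod.unitsMap_surjective hD) _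

theorem ZMod.isUnit_intCast_finset_lcm_iff {ι : Type*} (s : Finset ι) (d : ι → ℕ) (b : ℤ) :
    IsUnit (b : ZMod (s.lcm d)) ↔ ∀ i ∈ s, IsUnit (b : ZMod (d i)) := by
  simp only [ZMod.coe_int_isUnit_iff_isCoprime]
  refine ⟨fun h i hi => h.of_isCoprime_of_dvd_left ?_, fun h => ?_⟩
  · exact Int.natCast_dvd_natCast.2 (Finset.dvd_lcm hi)
  · refine (IsCoprime.prod_left h).of_isCoprime_of_dvd_left ?_
    exact_mod_cast Finset.lcm_dvd_prod s d

theorem card_filter_coprime_forall_dvd_sub_mul_totient {r : ℕ} (a : Fin r → ℤ) (d : Fin r → ℕ)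
    {M : ℕ} (hM : M ≠ 0) (hdM : univ.lcm d ∣ M) :
    #{k ∈ Icc 1 M | k.gcd M = 1 ∧ ∀ i, (d i : ℤ) ∣ ((k : ℕ) : ℤ) - a i} * (univ.lcm d).totient =
      M.totient * etaA a d := by
  have : NeZero M := ⟨hM⟩
  by_cases hsol : ∃ b : ℤ, ∀ i, (d i : ℤ) ∣ b - a i
  · obtain ⟨b, hb⟩ := hsol
    have hcompat : ∀ i j, ((d i).gcd (d j) : ℤ) ∣ a i - a j := by
      simpa using (Int.exists_forall_dvd_sub_iff univ d a).1 ⟨b, by simpa using hb⟩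
    have hsystem : ∀ k : ℕ, (∀ i, (d i : ℤ) ∣ k - a i) ↔
        ZMod.cast (k : ZMod M) = (b : ZMod (univ.lcm d)) := by
      intro k
      rw [ZMod.cast_natCast hdM, ← Int.cast_natCast (R := ZMod _) k,
        ZMod.intCast_eq_intCast_iff_dvd_sub, Int.natCast_finset_lcm_dvd_iff]
      refine forall_congr' fun i => ⟨fun hk _ => ?_, fun hk => ?_⟩
      · simpa using dvd_sub (hb i) hk
      · simpa using dvd_sub (hb i) (hk (mem_univ i))
    have hunit : IsUnit (b : ZMod (univ.lcm d)) ↔ ∀ i, Int.gcd (a i) (d i) = 1 := by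
      simp only [ZMod.isUnit_intCast_finset_lcm_iff, mem_univ, true_implies]
      refine forall_congr' fun i => ?_
      rw [← (ZMod.intCast_eq_intCast_iff_dvd_sub _ _ _).2 (hb i), ZMod.coe_int_isUnit_iff_isCoprime,
        isCoprime_comm, Int.isCoprime_iff_gcd_eq_one]
    rw [filter_congr fun k _ => and_congr Nat.coprime_iff_gcd_eq_one.symm (hsystem k)]
    rw [card_filter_Icc_coprime_eq_card_units (fun x => ZMod.cast x = (b : ZMod (univ.lcm d)))]
    by_cases hbD : IsUnit (b : ZMod (univ.lcm d))
    · rw [card_units_filter_cast_mul_totient hdM hbD, etaA, if_pos ⟨hunit.1 hbD, hcompat⟩,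
        mul_one]
    · rw [etaA, if_neg fun h => hbD (hunit.2 h.1), mul_zero, card_eq_zero.2, zero_mul]
      refine filter_eq_empty_iff.2 fun u _ hu => hbD ?_
      exact hu ▸ u.isUnit.map (ZMod.castHom hdM _)
  · rw [etaA, if_neg, mul_zero, card_eq_zero.2, zero_mul]
    · exact filter_eq_empty_iff.2 fun k _ hk => hsol ⟨k, hk.2⟩
    · rintro ⟨-, hcompat⟩
      exact hsol <| by
        simpa using (Int.exists_forall_dvd_sub_iff univ d a).2 (by simpa using hcompat)

theorem stmt10_general (r : ℕ) (a : Fin r → ℤ) (t : Fin r → ℕ)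
    (m : Fin r → ℕ) (hm : ∀ i, 0 < m i) (M : ℕ) (hM0 : 0 < M)
    (hM : (Finset.univ.lcm m) ∣ M) :
    (1 / (Nat.totient M : ℂ)) *
        ∑ k ∈ (Finset.Icc 1 M).filter (fun k => Nat.gcd k M = 1),
          ∏ i, ((Int.gcd ((k : ℤ) - a i) (m i) : ℕ) : ℂ) ^ (t i) =
      ∑ d ∈ Fintype.piFinset (fun i => (m i).divisors),
        (∏ i, jordanPhi (t i) (d i)) / (Nat.totient (Finset.univ.lcm d) : ℂ) *
          (etaA a d : ℂ) := by
  have htotient_ne_zero {n : ℕ} (hn : n ≠ 0) : (n.totient : ℂ) ≠ 0 := by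
    exact_mod_cast (Nat.totient_pos.2 (Nat.pos_of_ne_zero hn)).ne'
  rw [one_div, inv_mul_eq_iff_eq_mul₀ (htotient_ne_zero hM0.ne'), mul_sum]
  simp only [prod_gcd_pow_eq_sum_jordanPhi _ t m fun i => (hm i).ne']
  rw [sum_comm]
  refine sum_congr rfl fun d hd => ?_
  have hdM : univ.lcm d ∣ M := (lcm_mono_fun fun i _ =>
    Nat.dvd_of_mem_divisors (Fintype.mem_piFinset.1 hd i)).trans hM
  have hcount := congrArg (Nat.cast : ℕ → ℂ)
    (card_filter_coprime_forall_dvd_sub_mul_totient a d hM0.ne' hdM)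
  push_cast at hcount
  calc _ = ∑ k ∈ Icc 1 M with k.gcd M = 1 ∧ ∀ i, (d i : ℤ) ∣ ((k : ℕ) : ℤ) - a i,
        ∏ i, jordanPhi (t i) (d i) := by
        conv_rhs => rw [← filter_filter, sum_filter]
        -- the two `if`s differ only in their `Decidable` instances
        congr!
    _ = _ := by
      rw [sum_const, nsmul_eq_mul]
      field_simp [htotient_ne_zero (ne_zero_of_dvd_ne_zero hM0.ne' hdM)]
      linear_combination (∏ i, jordanPhi (t i) (d i)) * hcount

theorem stmt10 (r : ℕ) (hr : 1 ≤ r) (a : Fin r → ℤ) (t : Fin r → ℕ)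
    (m : Fin r → ℕ) (hm : ∀ i, 0 < m i) (M : ℕ) (hM0 : 0 < M)
    (hM : (Finset.univ.lcm m) ∣ M) :
    (1 / (Nat.totient M : ℂ)) *
        ∑ k ∈ (Finset.Icc 1 M).filter (fun k => Nat.gcd k M = 1),
          ∏ i, ((Int.gcd ((k : ℤ) - a i) (m i) : ℕ) : ℂ) ^ (t i) =
      ∑ d ∈ Fintype.piFinset (fun i => (m i).divisors),
        (∏ i, jordanPhi (t i) (d i)) / (Nat.totient (Finset.univ.lcm d) : ℂ) *
          (etaA a d : ℂ) :=
  stmt10_general r a t m hm M hM0 hM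
end

section
/- For any prime p and any u, v ∈ ℕ with u ≥ v ≥ 1, the number of cyclic subgroups of C_{p^u} × C_{p^v} equals 2(1 + p + p² + ⋯ + p^{v−1}) + (u − v + 1)·p^v. More generally, for any m₁, m₂ ∈ ℕ, the number of cyclic subgroups of C_{m₁} × C_{m₂} equals ∑_{d₁ ∣ m₁, d₂ ∣ m₂} φ(gcd(d₁, d₂)). -/
open Finset AddSubgroup

open scoped Classical

/-!
A cyclic subgroup `H` has exactly `φ |H|` generators, so counting the elements `x` of
`C_{m₁} × C_{m₂}` according to the orders `d₁, d₂` of their coordinates counts the cyclic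
subgroups whose projections have orders `d₁, d₂`, each with multiplicity `φ (lcm d₁ d₂)`.
There are `φ d₁ φ d₂` such elements, and `φ d₁ φ d₂ = φ (gcd d₁ d₂) φ (lcm d₁ d₂)`.
For `m₁ = p ^ u`, `m₂ = p ^ v` the double sum is evaluated using `∑_{j ≤ n} φ (p ^ j) = p ^ n`.
-/

section CyclicSubgroups

variable {G : Type*} [AddGroup G]

theorem zmultiples_eq_iff_mem_and_addOrderOf_eq {H : AddSubgroup G} [Finite H] {x : G} :
    zmultiples x = H ↔ x ∈ H ∧ addOrderOf x = Nat.card H := by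
  constructor
  · rintro rfl
    exact ⟨mem_zmultiples x, (Nat.card_zmultiples x).symm⟩
  · rintro ⟨hx, hord⟩
    exact eq_of_le_of_card_ge (zmultiples_le.2 hx) (by rw [Nat.card_zmultiples, hord])

variable [Fintype G]

theorem card_filter_zmultiples_eq (H : AddSubgroup G) [IsAddCyclic H] :
    #{x : G | zmultiples x = H} = Nat.totient (Nat.card H) := by
  rw [← Fintype.card_subtype, ← Nat.card_eq_fintype_card]
  calc Nat.card {x : G // zmultiples x = H}
      = Nat.card {x : G // x ∈ H ∧ addOrderOf x = Nat.card H} :=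
        Nat.card_congr (Equiv.subtypeEquivRight fun _ => zmultiples_eq_iff_mem_and_addOrderOf_eq)
    _ = Nat.card {a : H // addOrderOf a = Nat.card H} := by
        simp only [← addOrderOf_coe]
        exact Nat.card_congr (Equiv.subtypeSubtypeEquivSubtypeInter _ _).symm
    _ = Nat.totient (Nat.card H) := by
        rw [Nat.card_eq_fintype_card, Fintype.card_subtype, Nat.card_eq_fintype_card]
        exact IsAddCyclic.card_addOrderOf_eq_totient dvd_rfl

theorem card_filter_zmultiples_mem (S : Finset (AddSubgroup G)) (hS : ∀ H ∈ S, IsAddCyclic H) :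
    #{x : G | zmultiples x ∈ S} = ∑ H ∈ S, Nat.totient (Nat.card H) := by
  have hmaps : Set.MapsTo zmultiples (↑(univ.filter fun x : G => zmultiples x ∈ S) : Set G)
      (↑S : Set (AddSubgroup G)) :=
    fun x hx => by simpa using hx
  rw [card_eq_sum_card_fiberwise hmaps]
  refine sum_congr rfl fun H hH => ?_
  have := hS H hH
  rw [← card_filter_zmultiples_eq H, filter_filter]
  congr 1
  exact filter_congr fun x _ => and_iff_right_of_imp (· ▸ hH)

end CyclicSubgroups

theorem Nat.totient_gcd_mul_totient_lcm (a b : ℕ) :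
    Nat.totient (a.gcd b) * Nat.totient (a.lcm b) = Nat.totient a * Nat.totient b := by
  rcases a.eq_zero_or_pos with rfl | ha
  · simp
  have h := Nat.totient_gcd_mul_totient_mul (a.gcd b) (a.lcm b)
  rw [Nat.gcd_mul_lcm, Nat.gcd_eq_left ((Nat.gcd_dvd_left a b).trans (Nat.dvd_lcm_left a b))] at h
  exact Nat.eq_of_mul_eq_mul_right (Nat.gcd_pos_of_pos_left b ha)
    (h.symm.trans (Nat.totient_gcd_mul_totient_mul a b))

section Product

variable {G₁ G₂ : Type*} [AddGroup G₁] [AddGroup G₂]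

theorem card_map_fst_zmultiples (x : G₁ × G₂) :
    Nat.card ((zmultiples x).map (AddMonoidHom.fst G₁ G₂)) = addOrderOf x.1 := by
  rw [AddMonoidHom.map_zmultiples, Nat.card_zmultiples, AddMonoidHom.coe_fst]

theorem card_map_snd_zmultiples (x : G₁ × G₂) :
    Nat.card ((zmultiples x).map (AddMonoidHom.snd G₁ G₂)) = addOrderOf x.2 := by
  rw [AddMonoidHom.map_zmultiples, Nat.card_zmultiples, AddMonoidHom.coe_snd]

variable [Fintype G₁] [Fintype G₂] [IsAddCyclic G₁] [IsAddCyclic G₂]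

theorem card_filter_isAddCyclic_card_map_fst_snd_eq {d₁ d₂ : ℕ}
    (hd₁ : d₁ ∣ Nat.card G₁) (hd₂ : d₂ ∣ Nat.card G₂) :
    #{H : AddSubgroup (G₁ × G₂) | IsAddCyclic H ∧
      Nat.card (H.map (AddMonoidHom.fst G₁ G₂)) = d₁ ∧
      Nat.card (H.map (AddMonoidHom.snd G₁ G₂)) = d₂} = Nat.totient (d₁.gcd d₂) := by
  set S : Finset (AddSubgroup (G₁ × G₂)) := {H | IsAddCyclic H ∧
      Nat.card (H.map (AddMonoidHom.fst G₁ G₂)) = d₁ ∧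
      Nat.card (H.map (AddMonoidHom.snd G₁ G₂)) = d₂}
  have hmem : ∀ x : G₁ × G₂, zmultiples x ∈ S ↔ addOrderOf x.1 = d₁ ∧ addOrderOf x.2 = d₂ := by
    intro x
    simp only [S, mem_filter, mem_univ, true_and, card_map_fst_zmultiples,
      card_map_snd_zmultiples, isAddCyclic_zmultiples]
  have hcard : ∀ H ∈ S, Nat.card H = d₁.lcm d₂ := by
    intro H hH
    have := (mem_filter.1 hH).2.1
    obtain ⟨x, rfl⟩ := (AddSubgroup.isAddCyclic_iff_exists_zmultiples_eq_top H).1 this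
    obtain ⟨h₁, h₂⟩ := (hmem x).1 hH
    rw [Nat.card_zmultiples, Prod.addOrderOf, h₁, h₂]
  have hgen : #{x : G₁ × G₂ | zmultiples x ∈ S} = Nat.totient d₁ * Nat.totient d₂ := by
    rw [← IsAddCyclic.card_addOrderOf_eq_totient (Nat.card_eq_fintype_card (α := G₁) ▸ hd₁),
      ← IsAddCyclic.card_addOrderOf_eq_totient (Nat.card_eq_fintype_card (α := G₂) ▸ hd₂),
      ← card_product, ← filter_product]
    exact congrArg card (filter_congr fun x _ => hmem x)
  rw [card_filter_zmultiples_mem S fun H hH => (mem_filter.1 hH).2.1,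
    sum_congr rfl fun H hH => by rw [hcard H hH], sum_const, smul_eq_mul,
    ← Nat.totient_gcd_mul_totient_lcm] at hgen
  have hd₁0 : 0 < d₁ := Nat.pos_of_dvd_of_pos hd₁ Nat.card_pos
  have hd₂0 : 0 < d₂ := Nat.pos_of_dvd_of_pos hd₂ Nat.card_pos
  exact Nat.eq_of_mul_eq_mul_right (Nat.totient_pos.2 (Nat.lcm_pos hd₁0 hd₂0)) hgen

theorem card_isAddCyclic_addSubgroup_prod :
    Nat.card {H : AddSubgroup (G₁ × G₂) // IsAddCyclic H} =
      ∑ d₁ ∈ (Nat.card G₁).divisors, ∑ d₂ ∈ (Nat.card G₂).divisors, Nat.totient (d₁.gcd d₂) := by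
  let cardMaps : AddSubgroup (G₁ × G₂) → ℕ × ℕ := fun H =>
    (Nat.card (H.map (AddMonoidHom.fst G₁ G₂)), Nat.card (H.map (AddMonoidHom.snd G₁ G₂)))
  have hmaps : Set.MapsTo cardMaps (↑(univ.filter fun H : AddSubgroup (G₁ × G₂) => IsAddCyclic H))
      (↑((Nat.card G₁).divisors ×ˢ (Nat.card G₂).divisors) : Set (ℕ × ℕ)) := fun H _ => by
    simp only [cardMaps, coe_product, Set.mem_prod, mem_coe, Nat.mem_divisors]
    exact ⟨⟨card_addSubgroup_dvd_card _, Nat.card_pos.ne'⟩,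
      card_addSubgroup_dvd_card _, Nat.card_pos.ne'⟩
  rw [Nat.card_eq_fintype_card, Fintype.card_subtype, card_eq_sum_card_fiberwise hmaps,
    sum_product]
  refine sum_congr rfl fun d₁ hd₁ => sum_congr rfl fun d₂ hd₂ => ?_
  rw [← card_filter_isAddCyclic_card_map_fst_snd_eq (Nat.dvd_of_mem_divisors hd₁)
    (Nat.dvd_of_mem_divisors hd₂), filter_filter]
  simp only [cardMaps, Prod.ext_iff]

end Product

theorem card_isAddCyclic_addSubgroup_zmod_prod (m₁ m₂ : ℕ) [NeZero m₁] [NeZero m₂] :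
    Nat.card {H : AddSubgroup (ZMod m₁ × ZMod m₂) // IsAddCyclic H} =
      ∑ d₁ ∈ m₁.divisors, ∑ d₂ ∈ m₂.divisors, Nat.totient (d₁.gcd d₂) := by
  simpa only [Nat.card_zmod] using
    card_isAddCyclic_addSubgroup_prod (G₁ := ZMod m₁) (G₂ := ZMod m₂)

section PrimePower

variable {p : ℕ}

theorem sum_range_totient_prime_pow (hp : p.Prime) (n : ℕ) :
    ∑ j ∈ range (n + 1), Nat.totient (p ^ j) = p ^ n := by
  simpa [Nat.divisors_prime_pow hp] using Nat.sum_totient (p ^ n)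

theorem sum_range_totient_prime_pow_min_of_le (hp : p.Prime) {i n : ℕ} (h : n ≤ i) :
    ∑ j ∈ range (n + 1), Nat.totient (p ^ min i j) = p ^ n := by
  rw [← sum_range_totient_prime_pow hp n]
  exact sum_congr rfl fun j hj => by rw [min_eq_right (by grind)]

theorem sum_range_sum_range_totient_prime_pow_min (hp : p.Prime) (n : ℕ) :
    ∑ i ∈ range (n + 1), ∑ j ∈ range (n + 1), Nat.totient (p ^ min i j) =
      2 * ∑ i ∈ range n, p ^ i + p ^ n := by
  induction n with
  | zero => simp
  | succ n ih =>
    have hrow : ∀ i ∈ range (n + 1), ∑ j ∈ range (n + 2), Nat.totient (p ^ min i j) =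
        ∑ j ∈ range (n + 1), Nat.totient (p ^ min i j) + Nat.totient (p ^ i) := fun i hi => by
      rw [sum_range_succ, min_eq_left (by grind)]
    rw [sum_range_succ, sum_congr rfl hrow, sum_add_distrib, ih, sum_range_totient_prime_pow hp,
      sum_range_totient_prime_pow_min_of_le hp le_rfl, sum_range_succ]
    ring

theorem sum_divisors_totient_gcd_prime_pow (hp : p.Prime) {u v : ℕ} (h : v ≤ u) :
    ∑ d₁ ∈ (p ^ u).divisors, ∑ d₂ ∈ (p ^ v).divisors, Nat.totient (d₁.gcd d₂) =
      2 * ∑ i ∈ range v, p ^ i + (u - v + 1) * p ^ v := by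
  have hgcd : ∀ i j : ℕ, (p ^ i).gcd (p ^ j) = p ^ min i j := fun i j => by
    rcases le_total i j with hij | hij
    · rw [Nat.gcd_eq_left (pow_dvd_pow p hij), min_eq_left hij]
    · rw [Nat.gcd_eq_right (pow_dvd_pow p hij), min_eq_right hij]
  simp only [Nat.divisors_prime_pow hp, sum_map, Function.Embedding.coeFn_mk, hgcd]
  rw [show u + 1 = (v + 1) + (u - v) by omega, sum_range_add,
    sum_range_sum_range_totient_prime_pow_min hp,
    sum_congr rfl fun k _ => sum_range_totient_prime_pow_min_of_le hp (by omega),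
    sum_const, card_range, smul_eq_mul]
  ring

end PrimePower

theorem stmt17 :
    (∀ (p u v : ℕ), p.Prime → 1 ≤ v → v ≤ u →
      Nat.card {H : AddSubgroup (ZMod (p ^ u) × ZMod (p ^ v)) // IsAddCyclic H} =
        2 * (∑ i ∈ Finset.range v, p ^ i) + (u - v + 1) * p ^ v) ∧
    (∀ (m₁ m₂ : ℕ), 0 < m₁ → 0 < m₂ →
      Nat.card {H : AddSubgroup (ZMod m₁ × ZMod m₂) // IsAddCyclic H} =
        ∑ d₁ ∈ m₁.divisors, ∑ d₂ ∈ m₂.divisors, Nat.totient (Nat.gcd d₁ d₂)) := by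
  refine ⟨fun p u v hp _ hvu => ?_, fun m₁ m₂ h₁ h₂ => ?_⟩
  · have : NeZero (p ^ u) := ⟨(pow_pos hp.pos u).ne'⟩
    have : NeZero (p ^ v) := ⟨(pow_pos hp.pos v).ne'⟩
    rw [card_isAddCyclic_addSubgroup_zmod_prod, sum_divisors_totient_gcd_prime_pow hp hvu]
  · have : NeZero m₁ := ⟨h₁.ne'⟩
    have : NeZero m₂ := ⟨h₂.ne'⟩
    exact card_isAddCyclic_addSubgroup_zmod_prod m₁ m₂
end

section
/- Let a, b ∈ ℤ and n ∈ ℕ with gcd(b, n) = 1. Then ∑_{1 ≤ k ≤ n, gcd(k,n)=1} gcd(bk − a, n) = φ(n) · τ(n, a), where τ(n, a) denotes the number of divisors d of n with gcd(d, a) = 1. In particular, for a = b = 1 this gives Menon's identity ∑_{1 ≤ k ≤ n, gcd(k,n)=1} gcd(k − 1, n) = φ(n) τ(n), where τ(n) is the number of divisors of n. -/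
open Finset
open scoped Nat

/-!
By Gauss's identity `gcd(x, n) = ∑_{d ∣ gcd(x, n)} φ(d)`, the sum equals `∑_{d ∣ n} φ(d) N_d`,
where `N_d` counts the units `k` modulo `n` with `b k ≡ a (mod d)`. Reduction `(ℤ/n)ˣ → (ℤ/d)ˣ` is a
surjective homomorphism, so all its fibres have `φ(n) / φ(d)` elements; since `b` is invertible
modulo `d`, the condition picks out one fibre when `gcd(a, d) = 1` and nothing otherwise.
-/

theorem ZMod.isUnit_intCast_iff_gcd_eq_one (a : ℤ) (d : ℕ) :
    IsUnit (a : ZMod d) ↔ Int.gcd a d = 1 := by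
  rw [ZMod.coe_int_isUnit_iff_isCoprime, isCoprime_comm, Int.isCoprime_iff_gcd_eq_one]

theorem Int.gcd_natCast_eq_sum_totient {n : ℕ} (hn : n ≠ 0) (x : ℤ) :
    Int.gcd x n = ∑ d ∈ n.divisors with ((d : ℕ) : ℤ) ∣ x, φ d := by
  rw [← Nat.sum_totient (Int.gcd x n)]
  congr 1
  ext d
  simp [Nat.mem_divisors, Int.dvd_gcd_iff, hn, Int.natCast_dvd_natCast, and_comm]

theorem MonoidHom.card_fiber_mul_card_of_surjective {G H : Type*} [Group G] [Fintype G]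
    [Group H] [Fintype H] [DecidableEq H] (f : G →* H) (hf : Function.Surjective f) (y : H) :
    #{g | f g = y} * Fintype.card H = Fintype.card G := by
  calc #{g | f g = y} * Fintype.card H = ∑ z : H, #{g | f g = z} := by
        rw [mul_comm, ← smul_eq_mul, ← card_univ, ← sum_const]
        exact sum_congr rfl fun z _ => MonoidHom.card_fiber_eq_of_mem_range f (hf y) (hf z)
    _ = Fintype.card G := (card_eq_sum_card_fiberwise fun g _ => mem_univ (f g)).symm

theorem ZMod.sum_Icc_filter_coprime_eq_sum_units {M : Type*} [AddCommMonoid M] (n : ℕ)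
    [NeZero n] (g : ZMod n → M) :
    ∑ k ∈ Icc 1 n with Nat.gcd k n = 1, g k = ∑ u : (ZMod n)ˣ, g u := by
  -- `k ↦ (k : ZMod n)` maps `Icc 1 n` bijectively onto `ZMod n`, inverse `x ↦ (x - 1).val + 1`.
  refine sum_bij' (fun k hk => ZMod.unitOfCoprime k (mem_filter.1 hk).2)
    (fun u _ => ((u : ZMod n) - 1).val + 1) (fun _ _ => mem_univ _) ?_ ?_ ?_ (fun _ _ => rfl)
  · intro u _
    have hcast : ((((u : ZMod n) - 1).val + 1 : ℕ) : ZMod n) = u := by simp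
    refine mem_filter.2 ⟨mem_Icc.2 ⟨by omega, ZMod.val_lt _⟩, ?_⟩
    rw [← Nat.Coprime, ← ZMod.isUnit_iff_coprime, hcast]
    exact u.isUnit
  · intro k hk
    obtain ⟨⟨hk1, hkn⟩, -⟩ := by simpa only [mem_filter, mem_Icc] using hk
    have hpred : (k : ZMod n) - 1 = ((k - 1 : ℕ) : ZMod n) := by
      rw [Nat.cast_sub hk1, Nat.cast_one]
    simp only [ZMod.coe_unitOfCoprime, hpred, ZMod.val_natCast,
      Nat.mod_eq_of_lt (by omega : k - 1 < n)]
    omega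
  · intro u _
    ext
    simp

theorem ZMod.card_units_filter_mul_cast_eq_intCast_mul_totient {n d : ℕ} [NeZero n]
    (hd : d ∣ n) {b : ZMod d} (hb : IsUnit b) (a : ℤ) :
    #{u : (ZMod n)ˣ | b * ZMod.cast (u : ZMod n) = a} * φ d =
      if Int.gcd a d = 1 then φ n else 0 := by
  have : NeZero d := ⟨by rintro rfl; exact NeZero.ne n (zero_dvd_iff.1 hd)⟩
  split_ifs with hx <;> rw [← ZMod.isUnit_intCast_iff_gcd_eq_one] at hx
  · obtain ⟨c, hc⟩ := hx
    rw [← hc]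
    obtain ⟨b, rfl⟩ := hb
    have hfiber : ∀ u : (ZMod n)ˣ, (b : ZMod d) * ZMod.cast (u : ZMod n) = c ↔
        ZMod.unitsMap hd u = b⁻¹ * c := by
      intro u
      rw [eq_inv_mul_iff_mul_eq, Units.ext_iff, Units.val_mul, ZMod.unitsMap_val]
    simp_rw [hfiber, ← ZMod.card_units_eq_totient]
    exact (ZMod.unitsMap hd).card_fiber_mul_card_of_surjective (ZMod.unitsMap_surjective hd) _
  · rw [card_eq_zero.2, zero_mul]
    refine filter_eq_empty_iff.2 fun u _ hu => hx ?_
    exact hu ▸ hb.mul (ZMod.isUnit_cast_of_dvd hd u)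

theorem sum_gcd_mul_sub_eq_totient_mul_card (a b : ℤ) (n : ℕ) (hb : Int.gcd b n = 1) :
    ∑ k ∈ Icc 1 n with Nat.gcd k n = 1, Int.gcd (b * k - a) n =
      φ n * #{d ∈ n.divisors | Int.gcd a (d : ℕ) = 1} := by
  obtain rfl | hn := eq_or_ne n 0
  · simp
  have : NeZero n := ⟨hn⟩
  have hbn : IsUnit (b : ZMod n) := (ZMod.isUnit_intCast_iff_gcd_eq_one b n).2 hb
  calc ∑ k ∈ Icc 1 n with Nat.gcd k n = 1, Int.gcd (b * k - a) n
      = ∑ d ∈ n.divisors, ∑ k ∈ Icc 1 n with Nat.gcd k n = 1,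
          if (d : ℤ) ∣ b * k - a then φ d else 0 := by
        simp_rw [Int.gcd_natCast_eq_sum_totient hn, sum_filter (s := n.divisors)]
        exact sum_comm
    _ = ∑ d ∈ n.divisors,
          #{u : (ZMod n)ˣ | (b : ZMod d) * ZMod.cast (u : ZMod n) = a} * φ d := by
        refine sum_congr rfl fun d hd => ?_
        have hdvd : ∀ k : ℕ, (d : ℤ) ∣ b * k - a ↔
            (b : ZMod d) * ZMod.cast (k : ZMod n) = a := fun k => by
          rw [ZMod.cast_natCast (Nat.dvd_of_mem_divisors hd),
            ← ZMod.intCast_zmod_eq_zero_iff_dvd, Int.cast_sub, Int.cast_mul, Int.cast_natCast,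
            sub_eq_zero]
        simp_rw [hdvd]
        rw [ZMod.sum_Icc_filter_coprime_eq_sum_units n
          (fun x => if (b : ZMod d) * ZMod.cast x = a then φ d else 0), ← sum_filter, sum_const,
          smul_eq_mul]
    _ = ∑ d ∈ n.divisors, if Int.gcd a d = 1 then φ n else 0 := by
        refine sum_congr rfl fun d hd => ?_
        have hdvd := Nat.dvd_of_mem_divisors hd
        rw [ZMod.card_units_filter_mul_cast_eq_intCast_mul_totient hdvd]
        simpa using hbn.map (ZMod.castHom hdvd (ZMod d))
    _ = φ n * #{d ∈ n.divisors | Int.gcd a (d : ℕ) = 1} := by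
        rw [← sum_filter, sum_const, smul_eq_mul, mul_comm]

theorem stmt19_general (a b : ℤ) (n : ℕ) (hb : Int.gcd b n = 1) :
    (∑ k ∈ (Finset.Icc 1 n).filter (fun k => Nat.gcd k n = 1),
        Int.gcd (b * (k : ℤ) - a) n =
      Nat.totient n * ((n.divisors.filter (fun d : ℕ => Int.gcd a (d : ℤ) = 1)).card)) ∧
    (a = 1 → b = 1 →
      ∑ k ∈ (Finset.Icc 1 n).filter (fun k => Nat.gcd k n = 1),
          Int.gcd ((k : ℤ) - 1) n =
        Nat.totient n * n.divisors.card) := by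
  refine ⟨sum_gcd_mul_sub_eq_totient_mul_card a b n hb, ?_⟩
  rintro rfl rfl
  simpa using sum_gcd_mul_sub_eq_totient_mul_card 1 1 n (by simp)

theorem stmt19 (a b : ℤ) (n : ℕ) (hn : 0 < n) (hb : Int.gcd b n = 1) :
    (∑ k ∈ (Finset.Icc 1 n).filter (fun k => Nat.gcd k n = 1),
        Int.gcd (b * (k : ℤ) - a) n =
      Nat.totient n * ((n.divisors.filter (fun d : ℕ => Int.gcd a (d : ℤ) = 1)).card)) ∧
    (a = 1 → b = 1 →
      ∑ k ∈ (Finset.Icc 1 n).filter (fun k => Nat.gcd k n = 1),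
          Int.gcd ((k : ℤ) - 1) n =
        Nat.totient n * n.divisors.card) :=
  stmt19_general a b n hb
end
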